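/- Linear error contraction for parareal: let G, F : ℝ^d → ℝ^d with G Lipschitz with constant L, and suppose the 'discrepancy' map F - G satisfies ‖(F-G)(x) - (F-G)(y)‖ ≤ ε‖x - y‖ for all x, y. Then the parareal errors e^k_n := ‖u^k_n - u*_n‖ (with u*_{n+1} = F(u*_n), u*₀ = u₀) satisfy the recursive bound e^{k+1}_{n+1} ≤ L·e^{k+1}_n + ε·e^k_n, and consequently e^k_n ≤ ε^k · (binomial(n,k)) · max(1,L)^n · max_{m ≤ n} e^0_m. -/
import Mathlib


/-- Linear error contraction for parareal: if `G` is `L`-Lipschitz and `F - G` is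
`ε`-Lipschitz, the parareal errors `e^k_n = ‖u^k_n - F^[n] u₀‖` satisfy
`e^{k+1}_{n+1} ≤ L e^{k+1}_n + ε e^k_n` and hence
`e^k_n ≤ ε^k (n choose k) (max 1 L)^n max_{m ≤ n} e^0_m`. -/
theorem parareal_error_contraction {d : ℕ}
    (G F : EuclideanSpace ℝ (Fin d) → EuclideanSpace ℝ (Fin d))
    (L ε : ℝ) (hL : 0 ≤ L) (hε : 0 ≤ ε)
    (hGlip : ∀ x y, ‖G x - G y‖ ≤ L * ‖x - y‖)
    (hFGlip : ∀ x y, ‖(F x - G x) - (F y - G y)‖ ≤ ε * ‖x - y‖)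
    (u0 : EuclideanSpace ℝ (Fin d)) (u : ℕ → ℕ → EuclideanSpace ℝ (Fin d))
    (h0 : ∀ k, u k 0 = u0)
    (hrec : ∀ k n, u (k + 1) (n + 1) = G (u (k + 1) n) + F (u k n) - G (u k n)) :
    (∀ k n, ‖u (k + 1) (n + 1) - F^[n + 1] u0‖ ≤
        L * ‖u (k + 1) n - F^[n] u0‖ + ε * ‖u k n - F^[n] u0‖) ∧
    (∀ k n, ‖u k n - F^[n] u0‖ ≤
        ε ^ k * (n.choose k : ℝ) * max 1 L ^ n *
          (Finset.range (n + 1)).sup' (by simp) (fun m => ‖u 0 m - F^[m] u0‖)) := by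
  set e : ℕ → ℕ → ℝ := fun k n => ‖u k n - F^[n] u0‖ with he
  have hen : ∀ k n, 0 ≤ e k n := fun k n => norm_nonneg _
  have key : ∀ k n, e (k + 1) (n + 1) ≤ L * e (k + 1) n + ε * e k n := by
    intro k n
    have h1 := hGlip (u (k + 1) n) (F^[n] u0)
    have h2 := hFGlip (u k n) (F^[n] u0)
    have heq : u (k + 1) (n + 1) - F^[n + 1] u0 =
        (G (u (k + 1) n) - G (F^[n] u0)) +
          ((F (u k n) - G (u k n)) - (F (F^[n] u0) - G (F^[n] u0))) := by
      rw [hrec, Function.iterate_succ_apply']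
      abel
    simp only [he]
    rw [heq]
    exact (norm_add_le _ _).trans (add_le_add h1 h2)
  refine ⟨key, ?_⟩
  set A := max 1 L with hA
  have hA1 : (1 : ℝ) ≤ A := le_max_left _ _
  have hLA : L ≤ A := le_max_right _ _
  have hA0 : (0 : ℝ) ≤ A := le_trans zero_le_one hA1
  set M : ℕ → ℝ := fun n => (Finset.range (n + 1)).sup' (by simp) (fun m => e 0 m) with hM
  have hMle : ∀ n m, m ≤ n → e 0 m ≤ M n := by
    intro n m hm
    exact Finset.le_sup' (fun m => e 0 m) (Finset.mem_range.mpr (Nat.lt_succ_of_le hm))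
  have hM0 : ∀ n, 0 ≤ M n := fun n => le_trans (hen 0 0) (hMle n 0 (Nat.zero_le n))
  have hMmono : ∀ n, M n ≤ M (n + 1) := by
    intro n
    apply Finset.sup'_le
    intro m hm
    have hmn : m ≤ n := by
      have := Finset.mem_range.mp hm
      omega
    exact hMle (n + 1) m (le_trans hmn (Nat.le_succ n))
  have he0 : ∀ k, e k 0 = 0 := by
    intro k
    simp [he, h0]
  have main : ∀ n k, e k n ≤ ε ^ k * (n.choose k : ℝ) * A ^ n * M n := by
    intro n
    induction n with
    | zero =>
      intro k
      rw [he0]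
      cases k with
      | zero => simpa using hM0 0
      | succ k =>
        have : (Nat.choose 0 (k + 1) : ℝ) = 0 := by simp
        rw [this]
        simp
    | succ n ih =>
      intro k
      have hApow : (0 : ℝ) ≤ A ^ n := pow_nonneg hA0 n
      cases k with
      | zero =>
        have h1 : e 0 (n + 1) ≤ M (n + 1) := hMle (n + 1) (n + 1) le_rfl
        have h2 : (1 : ℝ) ≤ A ^ (n + 1) := one_le_pow₀ hA1
        calc e 0 (n + 1) ≤ M (n + 1) := h1
          _ ≤ A ^ (n + 1) * M (n + 1) := le_mul_of_one_le_left (hM0 _) h2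
          _ = ε ^ 0 * ((n + 1).choose 0 : ℝ) * A ^ (n + 1) * M (n + 1) := by simp
      | succ k =>
        have h1 := key k n
        have h2 := ih (k + 1)
        have h3 := ih k
        have hc1 : (0 : ℝ) ≤ ε ^ (k + 1) * (n.choose (k + 1) : ℝ) * A ^ n :=
          mul_nonneg (mul_nonneg (pow_nonneg hε _) (Nat.cast_nonneg _)) hApow
        have hc0 : (0 : ℝ) ≤ ε ^ (k + 1) * (n.choose k : ℝ) * A ^ n :=
          mul_nonneg (mul_nonneg (pow_nonneg hε _) (Nat.cast_nonneg _)) hApow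
        have hX : L * e (k + 1) n ≤
            A * (ε ^ (k + 1) * (n.choose (k + 1) : ℝ) * A ^ n * M (n + 1)) := by
          calc L * e (k + 1) n
              ≤ A * (ε ^ (k + 1) * (n.choose (k + 1) : ℝ) * A ^ n * M n) :=
                mul_le_mul hLA h2 (hen _ _) hA0
            _ ≤ A * (ε ^ (k + 1) * (n.choose (k + 1) : ℝ) * A ^ n * M (n + 1)) := by
                apply mul_le_mul_of_nonneg_left _ hA0
                exact mul_le_mul_of_nonneg_left (hMmono n) hc1
        have hY : ε * e k n ≤
            A * (ε ^ (k + 1) * (n.choose k : ℝ) * A ^ n * M (n + 1)) := by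
          calc ε * e k n
              ≤ ε * (ε ^ k * (n.choose k : ℝ) * A ^ n * M n) :=
                mul_le_mul_of_nonneg_left h3 hε
            _ = ε ^ (k + 1) * (n.choose k : ℝ) * A ^ n * M n := by ring
            _ ≤ ε ^ (k + 1) * (n.choose k : ℝ) * A ^ n * M (n + 1) :=
                mul_le_mul_of_nonneg_left (hMmono n) hc0
            _ ≤ A * (ε ^ (k + 1) * (n.choose k : ℝ) * A ^ n * M (n + 1)) :=
                le_mul_of_one_le_left (mul_nonneg hc0 (hM0 _)) hA1
        calc e (k + 1) (n + 1) ≤ L * e (k + 1) n + ε * e k n := h1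
          _ ≤ A * (ε ^ (k + 1) * (n.choose (k + 1) : ℝ) * A ^ n * M (n + 1))
              + A * (ε ^ (k + 1) * (n.choose k : ℝ) * A ^ n * M (n + 1)) := add_le_add hX hY
          _ = ε ^ (k + 1) * ((n.choose (k + 1) : ℝ) + (n.choose k : ℝ)) * A ^ (n + 1) *
              M (n + 1) := by ring
          _ = ε ^ (k + 1) * ((n + 1).choose (k + 1) : ℝ) * A ^ (n + 1) * M (n + 1) := by
            rw [Nat.choose_succ_succ]
            push_cast
            ring
  exact fun k n => main n k
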